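/- Let (X,d) be a pointed discrete metric space and m ≥ 0. A function f : X → S^m is Higson sublinear if and only if it is the uniform limit of functions g : X → S^m such that the functions g' : X → ℝ^{m+1}, g'(x) = |x|·g(x), are Lipschitz; that is, if and only if for every δ > 0 there exists g : X → S^m with sup_{x∈X} ‖f(x) − g(x)‖ ≤ δ and g' Lipschitz. -/

import Mathlib

/-!
(⇐) If `g` is unit-valued and `x ↦ |x| • g x` is `λ`-Lipschitz, then
`|x| * ‖g x - g y‖ ≤ (λ + 1) * d(x, y)`, so `g` moves by `o(1)` over sublinear distances, and
Higson sublinearity survives uniform limits.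

(⇒) Higson sublinearity implies a uniform statement: for `δ > 0` there are `a > 0`
and `R` with `d(f x, f y) ≤ δ` whenever `|x| ≥ R` and `d(x, y) ≤ a * |x|`; counterexamples
`xₙ, yₙ` to it would violate the definition for `s(t) = t * h(t)`, `h` a supremum of tents at
the `|xₙ|`. Consequently `H x = |x| • f x` is Lipschitz up to an error `η * |x| + C`, and
McShane's infimal convolution, taken coordinatewise, yields a Lipschitz `G` within
`√(m + 1) * (η * |x| + C)` of `H`. Far from `x₀` one takes `g = G / ‖G‖`, near `x₀` one keeps
`g = f`; the bounded part costs nothing because `X` is uniformly discrete.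
-/

/-- A function `s : [0,∞) → [0,∞)` is *asymptotically sublinear* if it is continuous,
nonnegative on `[0,∞)`, and for each non-constant linear function `r ↦ a·r + c`
(`a > 0`, `c ≥ 0`) there is `M ≥ 0` with `s(r) ≤ a·r + c + M` for all `r ≥ 0`. -/
def AsympSublinear (s : ℝ → ℝ) : Prop :=
  ContinuousOn s (Set.Ici 0) ∧ (∀ r : ℝ, 0 ≤ r → 0 ≤ s r) ∧
  ∀ a : ℝ, 0 < a → ∀ c : ℝ, 0 ≤ c → ∃ M : ℝ, 0 ≤ M ∧
    ∀ r : ℝ, 0 ≤ r → s r ≤ a * r + c + M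

/-- `f : X → Y` is *Higson sublinear* (with base point `x₀`) if for every asymptotically
sublinear `s` and all sequences `xₙ, yₙ → ∞` with `d(xₙ,yₙ) ≤ s(|xₙ|)`, one has
`d(f xₙ, f yₙ) → 0`. -/
def HigsonSublinear {X Y : Type*} [MetricSpace X] [MetricSpace Y] (x₀ : X) (f : X → Y) :
    Prop :=
  ∀ s : ℝ → ℝ, AsympSublinear s →
    ∀ x y : ℕ → X,
      Filter.Tendsto (fun n => dist (x n) x₀) Filter.atTop Filter.atTop →
      Filter.Tendsto (fun n => dist (y n) x₀) Filter.atTop Filter.atTop →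
      (∀ n, dist (x n) (y n) ≤ s (dist (x n) x₀)) →
      Filter.Tendsto (fun n => dist (f (x n)) (f (y n))) Filter.atTop (nhds 0)

/-- A function between metric spaces is *Lipschitz* if it is `λ`-Lipschitz for some `λ ≥ 0`. -/
def LipFun {X Y : Type*} [MetricSpace X] [MetricSpace Y] (f : X → Y) : Prop :=
  ∃ lam : ℝ, 0 ≤ lam ∧ ∀ x y, dist (f x) (f y) ≤ lam * dist x y

open Filter Topology

theorem LipschitzWith.ciSup {α ι : Type*} [PseudoMetricSpace α] [Nonempty ι]
    {f : ι → α → ℝ} {K : NNReal} (hf : ∀ i, LipschitzWith K (f i))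
    (hbdd : ∀ x, BddAbove (Set.range fun i => f i x)) :
    LipschitzWith K fun x => ⨆ i, f i x :=
  LipschitzWith.of_le_add_mul K fun x y =>
    ciSup_le fun i => ((hf i).le_add_mul x y).trans (by gcongr; exact le_ciSup (hbdd y) i)

theorem asympSublinear_mul_self {h : ℝ → ℝ} (hcont : Continuous h)
    (hbound : ∀ t, 0 ≤ h t ∧ h t ≤ 1) (hlim : Tendsto h atTop (𝓝 0)) :
    AsympSublinear fun t => t * h t := by
  refine ⟨(continuous_id.mul hcont).continuousOn, fun t ht => mul_nonneg ht (hbound t).1,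
    fun a ha c hc => ?_⟩
  obtain ⟨T, hT⟩ := eventually_atTop.1 (hlim.eventually (ge_mem_nhds ha))
  refine ⟨max T 0, le_max_right _ _, fun t ht => ?_⟩
  rcases le_or_gt T t with hTt | hTt
  · nlinarith [hT t hTt, le_max_right T 0]
  · nlinarith [(hbound t).1, (hbound t).2, le_max_left T 0]

theorem exists_lipschitz_tendsto_zero_ge {r c : ℕ → ℝ} (hr : ∀ n, 1 ≤ r n)
    (hc1 : ∀ n, c n ≤ 1) (hc : Tendsto c atTop (𝓝 0)) :
    ∃ h : ℝ → ℝ, LipschitzWith 1 h ∧ (∀ t, 0 ≤ h t ∧ h t ≤ 1) ∧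
      Tendsto h atTop (𝓝 0) ∧ ∀ n, c n ≤ h (r n) := by
  set φ : ℕ → ℝ → ℝ := fun n t => max 0 (min (c n) (2 - t / r n)) with hφ
  have hr0 n : 0 < r n := zero_lt_one.trans_le (hr n)
  have hφ_le n t : φ n t ≤ max 0 (c n) := max_le_max le_rfl (min_le_left _ _)
  have hφ_le_one n t : φ n t ≤ 1 := (hφ_le n t).trans (max_le zero_le_one (hc1 n))
  have hbdd t : BddAbove (Set.range fun n => φ n t) :=
    ⟨1, by rintro _ ⟨n, rfl⟩; exact hφ_le_one n t⟩
  have hφ_lip n : LipschitzWith 1 (φ n) := by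
    refine (LipschitzWith.of_dist_le_mul fun t t' => ?_).const_min (c n) |>.const_max 0
    rw [Real.dist_eq, Real.dist_eq, NNReal.coe_one, one_mul,
      show 2 - t / r n - (2 - t' / r n) = -((t - t') / r n) by ring, abs_neg, abs_div,
      abs_of_pos (hr0 n)]
    exact div_le_self (abs_nonneg _) (hr n)
  have hφ_far n : ∀ᶠ t in atTop, φ n t = 0 := by
    filter_upwards [eventually_ge_atTop (2 * r n)] with t ht
    refine max_eq_left (min_le_of_right_le ?_)
    rw [sub_nonpos, le_div_iff₀ (hr0 n)]
    linarith
  refine ⟨fun t => ⨆ n, φ n t, LipschitzWith.ciSup hφ_lip hbdd,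
    fun t => ⟨(le_max_left _ _).trans (le_ciSup (hbdd t) 0), ciSup_le (hφ_le_one · t)⟩,
    ?_, fun n => ?_⟩
  · refine tendsto_order.2 ⟨fun a ha => Eventually.of_forall fun t =>
      ha.trans_le ((le_max_left _ _).trans (le_ciSup (hbdd t) 0)), fun a ha => ?_⟩
    obtain ⟨K, hK⟩ := eventually_atTop.1 (hc.eventually (gt_mem_nhds (half_pos ha)))
    filter_upwards [(Finset.range K).eventually_all.2 fun n _ => hφ_far n] with t ht
    refine (ciSup_le fun n => ?_).trans_lt (half_lt_self ha)
    rcases lt_or_ge n K with hn | hn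
    · exact (ht n (Finset.mem_range.2 hn)).le.trans (half_pos ha).le
    · exact (hφ_le n t).trans (max_le (half_pos ha).le (hK n hn).le)
  · refine le_trans ?_ (le_ciSup (hbdd (r n)) n)
    simp only [hφ, div_self (hr0 n).ne']
    norm_num [hc1 n]

section Normed

variable {E : Type*} [NormedAddCommGroup E] [NormedSpace ℝ E]

theorem norm_smul_sub_smul_le (p q : ℝ) (u v : E) :
    ‖p • u - q • v‖ ≤ |p| * ‖u - v‖ + |p - q| * ‖v‖ := by
  calc ‖p • u - q • v‖ = ‖p • (u - v) + (p - q) • v‖ := by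
        rw [smul_sub, sub_smul]; abel_nf
    _ ≤ |p| * ‖u - v‖ + |p - q| * ‖v‖ := by
        simpa only [norm_smul, Real.norm_eq_abs] using norm_add_le (p • (u - v)) ((p - q) • v)

theorem abs_mul_norm_sub_le (p q : ℝ) (u v : E) :
    |p| * ‖u - v‖ ≤ ‖p • u - q • v‖ + |p - q| * ‖v‖ := by
  calc |p| * ‖u - v‖ = ‖(p • u - q • v) - (p - q) • v‖ := by
        rw [← Real.norm_eq_abs, ← norm_smul, smul_sub, sub_smul]; abel_nf
    _ ≤ ‖p • u - q • v‖ + |p - q| * ‖v‖ := by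
        simpa only [norm_smul, Real.norm_eq_abs] using norm_sub_le (p • u - q • v) ((p - q) • v)

theorem NormedSpace.norm_normalize_sub_normalize_le {u : E} (hu : u ≠ 0) (v : E) :
    ‖normalize u - normalize v‖ ≤ 2 * ‖u - v‖ / ‖u‖ := by
  have hu' : 0 < ‖u‖ := norm_pos_iff.2 hu
  have hv : ‖‖u‖⁻¹ • v - normalize v‖ ≤ ‖u - v‖ / ‖u‖ := by
    rw [normalize, ← sub_smul, norm_smul, Real.norm_eq_abs]
    rcases eq_or_ne v 0 with rfl | hv
    · simp [div_nonneg]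
    have : (‖u‖⁻¹ - ‖v‖⁻¹) * ‖v‖ = (‖v‖ - ‖u‖) / ‖u‖ := by
      field_simp [(norm_pos_iff.2 hv).ne']
    calc |‖u‖⁻¹ - ‖v‖⁻¹| * ‖v‖ = |(‖v‖ - ‖u‖) / ‖u‖| := by rw [← this, abs_mul, abs_norm]
      _ ≤ ‖u - v‖ / ‖u‖ := by
          rw [abs_div, abs_of_pos hu', abs_sub_comm]
          gcongr
          exact abs_norm_sub_norm_le u v
  calc ‖normalize u - normalize v‖ ≤ ‖normalize u - ‖u‖⁻¹ • v‖ + ‖‖u‖⁻¹ • v - normalize v‖ :=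
        norm_sub_le_norm_sub_add_norm_sub _ _ _
    _ ≤ ‖u - v‖ / ‖u‖ + ‖u - v‖ / ‖u‖ := by
        gcongr
        rw [normalize, ← smul_sub, norm_smul, norm_inv, norm_norm, inv_mul_eq_div]
    _ = 2 * ‖u - v‖ / ‖u‖ := by ring

theorem NormedSpace.norm_normalize_le (v : E) : ‖normalize v‖ ≤ 1 := by
  rcases eq_or_ne v 0 with rfl | hv
  · simp
  · exact (norm_normalize hv).le

theorem NormedSpace.norm_sub_normalize_le {w : E} (hw : ‖w‖ = 1) {p : ℝ} (hp : 0 < p) (u : E) :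
    ‖w - normalize u‖ ≤ 2 * ‖p • w - u‖ / p := by
  have hpw : ‖p • w‖ = p := by rw [norm_smul, Real.norm_of_nonneg hp.le, hw, mul_one]
  have hne : p • w ≠ 0 := norm_pos_iff.1 (hpw.symm ▸ hp)
  calc ‖w - normalize u‖ = ‖normalize (p • w) - normalize u‖ := by
        rw [normalize_smul_of_pos hp, normalize_eq_self_of_norm_eq_one hw]
    _ ≤ 2 * ‖p • w - u‖ / p := (norm_normalize_sub_normalize_le hne u).trans_eq (by rw [hpw])

theorem NormedSpace.norm_smul_normalize_sub_smul_normalize_le {u : E} (hu : u ≠ 0) {p : ℝ}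
    (hp : 0 ≤ p) (hpu : p ≤ 2 * ‖u‖) (q : ℝ) (v : E) :
    ‖p • normalize u - q • normalize v‖ ≤ 4 * ‖u - v‖ + |p - q| := by
  have hu' : 0 < ‖u‖ := norm_pos_iff.2 hu
  calc ‖p • normalize u - q • normalize v‖
      ≤ |p| * ‖normalize u - normalize v‖ + |p - q| * ‖normalize v‖ :=
        norm_smul_sub_smul_le _ _ _ _
    _ ≤ p * (2 * ‖u - v‖ / ‖u‖) + |p - q| * 1 := by
        rw [abs_of_nonneg hp]
        gcongr
        exacts [norm_normalize_sub_normalize_le hu v, norm_normalize_le v]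
    _ ≤ 4 * ‖u - v‖ + |p - q| := by
        have : p * (2 * ‖u - v‖ / ‖u‖) ≤ 4 * ‖u - v‖ := by
          rw [mul_div_assoc', div_le_iff₀ hu']
          nlinarith [norm_nonneg (u - v)]
        linarith

end Normed

theorem EuclideanSpace.norm_le_sqrt_card_mul {ι : Type*} [Fintype ι] (w : EuclideanSpace ℝ ι)
    {b : ℝ} (hb : 0 ≤ b) (h : ∀ i, |w i| ≤ b) : ‖w‖ ≤ √(Fintype.card ι) * b := by
  rw [EuclideanSpace.norm_eq, ← Real.sqrt_sq hb, ← Real.sqrt_mul (Nat.cast_nonneg _)]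
  refine Real.sqrt_le_sqrt ?_
  calc ∑ i, ‖w i‖ ^ 2 ≤ ∑ _i : ι, b ^ 2 :=
        Finset.sum_le_sum fun i _ => pow_le_pow_left₀ (norm_nonneg _) (h i) 2
    _ = Fintype.card ι * b ^ 2 := by simp

section Metric

variable {X Y E ι : Type*} [MetricSpace X] [MetricSpace Y] [NormedAddCommGroup E]
  [NormedSpace ℝ E] [Fintype ι] {x₀ : X}

theorem exists_lipschitz_near_of_sub_le {u e : X → ℝ} {L : ℝ} (hL : 0 ≤ L)
    (hu : ∀ x y, u x - u y ≤ L * dist x y + e x) :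
    ∃ v : X → ℝ, (∀ x y, |v x - v y| ≤ L * dist x y) ∧ ∀ x, |v x - u x| ≤ e x := by
  have hbdd x : BddBelow (Set.range fun y => u y + L * dist x y) :=
    ⟨u x - e x, by rintro _ ⟨y, rfl⟩; linarith [hu x y]⟩
  -- McShane's infimal convolution
  refine ⟨fun x => ⨅ y, u y + L * dist x y, fun x y => ?_, fun x => ?_⟩
  · have : Nonempty X := ⟨x⟩
    have key x z : ⨅ y, u y + L * dist x y ≤ (⨅ y, u y + L * dist z y) + L * dist x z := by
      rw [← sub_le_iff_le_add]
      refine le_ciInf fun y => sub_le_iff_le_add.2 ((ciInf_le (hbdd x) y).trans ?_)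
      nlinarith [dist_triangle x z y]
    dsimp only
    rw [abs_sub_le_iff]
    constructor
    · linarith [key x y]
    · linarith [dist_comm y x ▸ key y x]
  · have : Nonempty X := ⟨x⟩
    have he : 0 ≤ e x := by simpa using hu x x
    dsimp only
    rw [abs_sub_le_iff]
    constructor
    · have hle := ciInf_le (hbdd x) x
      simp only [dist_self, mul_zero, add_zero] at hle
      linarith
    · linarith [le_ciInf fun y => (by linarith [hu x y] : u x - e x ≤ u y + L * dist x y)]

theorem exists_lipschitz_near_of_norm_sub_le {u : X → EuclideanSpace ℝ ι} {e : X → ℝ} {L : ℝ}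
    (hL : 0 ≤ L) (hu : ∀ x y, ‖u x - u y‖ ≤ L * dist x y + e x) :
    ∃ v : X → EuclideanSpace ℝ ι, (∀ x y, ‖v x - v y‖ ≤ √(Fintype.card ι) * L * dist x y) ∧
      ∀ x, ‖v x - u x‖ ≤ √(Fintype.card ι) * e x := by
  choose v hv_lip hv_near using fun i => exists_lipschitz_near_of_sub_le hL
    (u := fun x => u x i) fun x y => (le_abs_self _).trans
      ((PiLp.norm_apply_le (u x - u y) i).trans (hu x y))
  refine ⟨fun x => WithLp.toLp 2 fun i => v i x, fun x y => ?_, fun x => ?_⟩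
  · rw [mul_assoc]
    exact EuclideanSpace.norm_le_sqrt_card_mul _ (by positivity) fun i => hv_lip i x y
  · have he : 0 ≤ e x := by simpa using hu x x
    exact EuclideanSpace.norm_le_sqrt_card_mul _ he fun i => hv_near i x

theorem lipFun_smul_of_separated {ε : ℝ} (hε : 0 < ε) (hsep : ∀ x y : X, x ≠ y → ε ≤ dist x y)
    {g : X → E} (hg : ∀ x, ‖g x‖ ≤ 1) {ρ L : ℝ} (hρ : 0 ≤ ρ)
    (hfar : ∀ x y, ρ ≤ dist x x₀ → ρ ≤ dist y x₀ →
      ‖dist x x₀ • g x - dist y x₀ • g y‖ ≤ L * dist x y) :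
    LipFun fun x => dist x x₀ • g x := by
  have hsmul z : ‖dist z x₀ • g z‖ ≤ dist z x₀ := by
    rw [norm_smul, Real.norm_of_nonneg dist_nonneg]
    exact mul_le_of_le_one_right dist_nonneg (hg z)
  have hnear x y : dist x x₀ < ρ →
      ‖dist x x₀ • g x - dist y x₀ • g y‖ ≤ (2 * ρ / ε + 1) * dist x y := by
    intro hx
    rcases eq_or_ne x y with rfl | hxy
    · simp
    have hρε : 2 * ρ ≤ 2 * ρ / ε * dist x y := by
      rw [div_mul_eq_mul_div, le_div_iff₀ hε]
      gcongr
      exact hsep x y hxy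
    calc ‖dist x x₀ • g x - dist y x₀ • g y‖ ≤ dist x x₀ + dist y x₀ :=
          (norm_sub_le _ _).trans (add_le_add (hsmul x) (hsmul y))
      _ ≤ 2 * ρ + dist x y := by linarith [dist_triangle_left y x₀ x, dist_comm x y]
      _ ≤ (2 * ρ / ε + 1) * dist x y := by linarith
  refine ⟨max L (2 * ρ / ε + 1), le_max_of_le_right (by positivity), fun x y => ?_⟩
  rw [dist_eq_norm]
  rcases lt_or_ge (dist x x₀) ρ with hx | hx
  · exact (hnear x y hx).trans (by gcongr; exact le_max_right _ _)
  rcases lt_or_ge (dist y x₀) ρ with hy | hy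
  · rw [norm_sub_rev, dist_comm x y]
    exact (hnear y x hy).trans (by gcongr; exact le_max_right _ _)
  · exact (hfar x y hx hy).trans (by gcongr; exact le_max_left _ _)

theorem higsonSublinear_of_lipFun_smul {g : X → E} (hg : ∀ x, ‖g x‖ ≤ 1)
    (hlip : LipFun fun x => dist x x₀ • g x) : HigsonSublinear x₀ g := by
  obtain ⟨lam, hlam0, hlam⟩ := hlip
  have hkey a b : dist a x₀ * dist (g a) (g b) ≤ (lam + 1) * dist a b := by
    calc dist a x₀ * dist (g a) (g b)
        ≤ ‖dist a x₀ • g a - dist b x₀ • g b‖ + |dist a x₀ - dist b x₀| * ‖g b‖ := by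
          simpa only [abs_of_nonneg dist_nonneg, dist_eq_norm] using
            abs_mul_norm_sub_le (dist a x₀) (dist b x₀) (g a) (g b)
      _ ≤ lam * dist a b + dist a b * 1 := by
          rw [← dist_eq_norm]
          gcongr
          exacts [hlam a b, abs_dist_sub_le a b x₀, hg b]
      _ = (lam + 1) * dist a b := by ring
  intro s hs x y hx _ hxy
  refine Metric.tendsto_nhds.2 fun ε hε => ?_
  obtain ⟨M, hM0, hM⟩ := hs.2.2 (ε / (2 * (lam + 1))) (by positivity) 0 le_rfl
  filter_upwards [hx.eventually_gt_atTop (2 * (lam + 1) * M / ε)] with n hn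
  set p := dist (x n) x₀
  have hp : 0 < p := lt_of_le_of_lt (by positivity) hn
  rw [Real.dist_0_eq_abs, abs_of_nonneg dist_nonneg]
  have hbound : p * dist (g (x n)) (g (y n)) ≤ (lam + 1) * (ε / (2 * (lam + 1)) * p + 0 + M) :=
    (hkey _ _).trans (by gcongr; exact (hxy n).trans (hM p hp.le))
  refine lt_of_mul_lt_mul_left (hbound.trans_lt ?_) hp.le
  rw [div_lt_iff₀ hε] at hn
  field_simp
  nlinarith

theorem HigsonSublinear.of_forall_dist_le {f : X → Y}
    (h : ∀ δ > 0, ∃ g : X → Y, HigsonSublinear x₀ g ∧ ∀ x, dist (f x) (g x) ≤ δ) :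
    HigsonSublinear x₀ f := by
  intro s hs x y hx hy hxy
  refine Metric.tendsto_nhds.2 fun ε hε => ?_
  obtain ⟨g, hg, hfg⟩ := h (ε / 3) (by positivity)
  filter_upwards [(Metric.tendsto_nhds.1 (hg s hs x y hx hy hxy)) (ε / 3) (by positivity)]
    with n hn
  rw [Real.dist_0_eq_abs, abs_of_nonneg dist_nonneg] at hn ⊢
  have h₁ := hfg (x n)
  have h₂ := hfg (y n)
  rw [dist_comm] at h₂
  linarith [dist_triangle4 (f (x n)) (g (x n)) (g (y n)) (f (y n))]

theorem HigsonSublinear.exists_uniform {f : X → Y} (hf : HigsonSublinear x₀ f) {δ : ℝ}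
    (hδ : 0 < δ) :
    ∃ a > 0, ∃ R : ℝ, ∀ x y, R ≤ dist x x₀ → dist x y ≤ a * dist x x₀ →
      dist (f x) (f y) ≤ δ := by
  by_contra! hcon
  choose x y hxR hxy hδxy using fun n : ℕ =>
    hcon (1 / ((n : ℝ) + 1)) Nat.one_div_pos_of_nat ((n : ℝ) + 1)
  have hc1 (n : ℕ) : 1 / ((n : ℝ) + 1) ≤ 1 :=
    div_le_one_of_le₀ (by linarith [n.cast_nonneg (α := ℝ)]) (by positivity)
  obtain ⟨h, hlip, hbound, hlim, hch⟩ := exists_lipschitz_tendsto_zero_ge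
    (fun n => le_trans (by linarith [n.cast_nonneg (α := ℝ)]) (hxR n)) hc1
    tendsto_one_div_add_atTop_nhds_zero_nat
  have hx : Tendsto (fun n => dist (x n) x₀) atTop atTop :=
    tendsto_atTop_mono hxR (tendsto_atTop_add_const_right _ 1 tendsto_natCast_atTop_atTop)
  -- `|y n| ≥ |x n| - |x n| / (n + 1) ≥ n`
  have hy : Tendsto (fun n => dist (y n) x₀) atTop atTop := by
    refine tendsto_atTop_mono (fun n => ?_) tendsto_natCast_atTop_atTop
    have h1 := dist_triangle (x n) (y n) x₀
    have h2 := hxy n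
    have h3 := hxR n
    rw [div_mul_eq_mul_div, one_mul, le_div_iff₀ (by positivity)] at h2
    nlinarith [n.cast_nonneg (α := ℝ)]
  have hlim := hf _ (asympSublinear_mul_self hlip.continuous hbound hlim) x y hx hy fun n =>
    (hxy n).trans (by rw [mul_comm]; gcongr; exact hch n)
  obtain ⟨n, hn⟩ := (hlim.eventually (gt_mem_nhds hδ)).exists
  exact (hδxy n).not_gt hn

theorem HigsonSublinear.exists_norm_smul_sub_smul_le {f : X → E} (hf : HigsonSublinear x₀ f)
    (hf1 : ∀ x, ‖f x‖ ≤ 1) {η : ℝ} (hη : 0 < η) :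
    ∃ L C : ℝ, 0 ≤ L ∧ ∀ x y,
      ‖dist x x₀ • f x - dist y x₀ • f y‖ ≤ L * dist x y + (η * dist x x₀ + C) := by
  obtain ⟨a, ha, R, hR⟩ := hf.exists_uniform hη
  refine ⟨1 + 2 / a, 2 * |R|, by positivity, fun x y => ?_⟩
  have hfxy : ‖f x - f y‖ ≤ 2 := (norm_sub_le _ _).trans (by linarith [hf1 x, hf1 y])
  have hx0 : 0 ≤ dist x x₀ := dist_nonneg
  have hxy0 : 0 ≤ 2 / a * dist x y := by positivity
  have hmain : dist x x₀ * ‖f x - f y‖ ≤ 2 / a * dist x y + η * dist x x₀ + 2 * |R| := by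
    rcases lt_or_ge (dist x x₀) R with hxR | hxR
    · nlinarith [le_abs_self R, norm_nonneg (f x - f y)]
    rcases le_or_gt (dist x y) (a * dist x x₀) with hxy | hxy
    · have hclose := hR x y hxR hxy
      rw [dist_eq_norm] at hclose
      nlinarith [abs_nonneg R]
    · have hxa : dist x x₀ ≤ dist x y / a := by rw [le_div_iff₀ ha]; linarith
      have hfar : dist x x₀ * ‖f x - f y‖ ≤ 2 / a * dist x y :=
        (mul_le_mul hxa hfxy (norm_nonneg _) (by positivity)).trans_eq (by ring)
      nlinarith [abs_nonneg R]
  calc ‖dist x x₀ • f x - dist y x₀ • f y‖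
      ≤ |dist x x₀| * ‖f x - f y‖ + |dist x x₀ - dist y x₀| * ‖f y‖ :=
        norm_smul_sub_smul_le _ _ _ _
    _ ≤ dist x x₀ * ‖f x - f y‖ + dist x y * 1 := by
        rw [abs_of_nonneg hx0]
        gcongr
        exacts [abs_dist_sub_le x y x₀, hf1 y]
    _ ≤ (1 + 2 / a) * dist x y + (η * dist x x₀ + 2 * |R|) := by linarith

theorem HigsonSublinear.exists_lipschitz_near_smul {f : X → EuclideanSpace ℝ ι}
    (hf : HigsonSublinear x₀ f) (hf1 : ∀ x, ‖f x‖ ≤ 1) {η : ℝ} (hη : 0 < η) :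
    ∃ G : X → EuclideanSpace ℝ ι, ∃ L, (∀ x y, ‖G x - G y‖ ≤ L * dist x y) ∧
      ∃ ρ > 0, ∀ x, ρ ≤ dist x x₀ → ‖G x - dist x x₀ • f x‖ ≤ η * dist x x₀ := by
  set k := √(Fintype.card ι)
  have hk : 0 ≤ k := Real.sqrt_nonneg _
  obtain ⟨L, C, hL, hH⟩ :=
    hf.exists_norm_smul_sub_smul_le hf1 (η := η / (2 * (k + 1))) (by positivity)
  obtain ⟨G, hGlip, hGnear⟩ := exists_lipschitz_near_of_norm_sub_le hL hH
  refine ⟨G, k * L, hGlip, max 1 (2 * k * C / η), by positivity, fun x hx => (hGnear x).trans ?_⟩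
  have h1 : k * (η / (2 * (k + 1))) ≤ η / 2 := by
    rw [mul_div_assoc', div_le_div_iff₀ (by positivity) two_pos]
    nlinarith
  have h2 : k * C ≤ η / 2 * dist x x₀ := by
    have := (le_max_right _ _).trans hx
    rw [div_le_iff₀ hη] at this
    linarith
  nlinarith [dist_nonneg (x := x) (y := x₀)]

open NormedSpace in
theorem HigsonSublinear.exists_approx_lipFun_smul {ε : ℝ} (hε : 0 < ε)
    (hsep : ∀ x y : X, x ≠ y → ε ≤ dist x y) {f : X → EuclideanSpace ℝ ι}
    (hf : HigsonSublinear x₀ f) (hf1 : ∀ x, ‖f x‖ = 1) {δ : ℝ} (hδ : 0 < δ) :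
    ∃ g : X → EuclideanSpace ℝ ι, (∀ x, ‖g x‖ = 1) ∧ (∀ x, ‖f x - g x‖ ≤ δ) ∧
      LipFun fun x => dist x x₀ • g x := by
  set η := min (δ / 2) (1 / 2)
  obtain ⟨G, L, hGlip, ρ, hρ, hGnear⟩ :=
    hf.exists_lipschitz_near_smul (fun x => (hf1 x).le) (η := η) (by positivity)
  have hnorm x : ‖dist x x₀ • f x‖ = dist x x₀ := by
    rw [norm_smul, Real.norm_of_nonneg dist_nonneg, hf1, mul_one]
  have hGlarge x (hx : ρ ≤ dist x x₀) : dist x x₀ / 2 ≤ ‖G x‖ := by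
    have := norm_sub_norm_le (dist x x₀ • f x) (G x)
    rw [hnorm, norm_sub_rev] at this
    nlinarith [hGnear x hx, min_le_right (δ / 2) (1 / 2), dist_nonneg (x := x) (y := x₀)]
  have hGpos x (hx : ρ ≤ dist x x₀) : 0 < ‖G x‖ :=
    (half_pos (hρ.trans_le hx)).trans_le (hGlarge x hx)
  set g := fun x => if dist x x₀ < ρ then f x else normalize (G x)
  have hg_far x (hx : ρ ≤ dist x x₀) : g x = normalize (G x) := if_neg hx.not_gt
  have hg1 x : ‖g x‖ = 1 := by
    rcases lt_or_ge (dist x x₀) ρ with hx | hx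
    · simp [g, hx, hf1]
    · rw [hg_far x hx]
      exact norm_normalize (norm_pos_iff.1 (hGpos x hx))
  refine ⟨g, hg1, fun x => ?_, lipFun_smul_of_separated hε hsep (fun x => (hg1 x).le) hρ.le
    (L := 4 * L + 1) fun x y hx hy => ?_⟩
  · rcases lt_or_ge (dist x x₀) ρ with hx | hx
    · simp [g, hx, hδ.le]
    have hx0 : 0 < dist x x₀ := hρ.trans_le hx
    calc ‖f x - g x‖ ≤ 2 * ‖dist x x₀ • f x - G x‖ / dist x x₀ := by
          rw [hg_far x hx]
          exact norm_sub_normalize_le (hf1 x) hx0 (G x)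
      _ ≤ 2 * (η * dist x x₀) / dist x x₀ := by
          rw [norm_sub_rev]
          gcongr
          exact hGnear x hx
      _ ≤ δ := by
          rw [mul_div_assoc, mul_div_cancel_right₀ _ hx0.ne']
          linarith [min_le_left (δ / 2) (1 / 2)]
  · rw [hg_far x hx, hg_far y hy]
    refine (norm_smul_normalize_sub_smul_normalize_le (norm_pos_iff.1 (hGpos x hx)) dist_nonneg
      (by linarith [hGlarge x hx]) _ _).trans ?_
    linarith [hGlip x y, abs_dist_sub_le x y x₀]

end Metric

/-- on a pointed discrete metric space, `f : X → Sᵐ` is Higson sublinear iff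
for every `δ > 0` there is `g : X → Sᵐ` with `‖f x − g x‖ ≤ δ` for all `x` and
`g'(x) = |x|·g(x)` Lipschitz. -/
theorem stmt_12 {X : Type*} [MetricSpace X] (x₀ : X)
    (hdisc : ∃ ε > 0, ∀ x y : X, x ≠ y → ε ≤ dist x y) (m : ℕ)
    (f : X → EuclideanSpace ℝ (Fin (m + 1))) (hf1 : ∀ x, ‖f x‖ = 1) :
    HigsonSublinear x₀ f ↔
      ∀ δ > (0 : ℝ), ∃ g : X → EuclideanSpace ℝ (Fin (m + 1)),
        (∀ x, ‖g x‖ = 1) ∧ (∀ x, ‖f x - g x‖ ≤ δ) ∧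
        LipFun (fun x : X => dist x x₀ • g x) := by
  obtain ⟨ε, hε, hsep⟩ := hdisc
  refine ⟨fun hf δ hδ => hf.exists_approx_lipFun_smul hε hsep hf1 hδ, fun happrox => ?_⟩
  refine HigsonSublinear.of_forall_dist_le fun δ hδ => ?_
  obtain ⟨g, hg1, hfg, hlip⟩ := happrox δ hδ
  exact ⟨g, higsonSublinear_of_lipFun_smul (fun x => (hg1 x).le) hlip,
    fun x => (dist_eq_norm _ _).trans_le (hfg x)⟩
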